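/- arXiv:2006.07051 — 6 statements merged into one kernel-verified Lean document; each statement's English description precedes it below -/
import Mathlib

section
/- Let γ > 0 and let t₀ > 0 satisfy (t₀ - 1)e^{t₀} = 1/γ - 1. Define û(t) = γ(e^{t₀} - e^t) for t ∈ (0, t₀] and û(t) = 0 for t > t₀, and let ŷ(t) = e^t(-1 + ∫₀^t û(τ) dτ). Then for t ∈ (0, t₀) one has ŷ(t) = γ·t·e^{t+t₀} - γ·e^{2t} + (γ - 1)·e^t ≤ 0, and for all t ≥ t₀ one has ŷ(t) = 0. In particular ŷ(t) ≤ 0 for all t ≥ 0. -/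
/-!
Since `û` vanishes after `t₀`, for `t ≥ 0` we get `∫₀ᵗ û = γ (m e^{t₀} - e^m + 1)` with
`m = min t t₀`. The equation defining `t₀` says exactly that this equals `1` at `m = t₀`, so `ŷ`
vanishes from `t₀` on, and it rewrites `e^{-t} ŷ(t)` as `γ ((m - t₀ + 1) e^{t₀} - e^m)`, which is
`≤ 0` because `exp` lies above its tangent line at `t₀`.
-/

open MeasureTheory intervalIntegral

open Real

theorem Real.sub_add_one_mul_exp_le_exp (s t : ℝ) : (t - s + 1) * exp s ≤ exp t := by
  calc (t - s + 1) * exp s ≤ exp (t - s) * exp s := by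
        gcongr
        linarith [add_one_le_exp (t - s)]
    _ = exp t := by rw [← exp_add, sub_add_cancel]

theorem intervalIntegral.integral_indicator_Iic {E : Type*} [NormedAddCommGroup E]
    [NormedSpace ℝ E] (f : ℝ → E) {a b s : ℝ} (hab : a ≤ b) (has : a ≤ s) :
    ∫ x in a..b, (Set.Iic s).indicator f x = ∫ x in a..min b s, f x := by
  rw [integral_of_le hab, integral_of_le (le_min hab has),
    MeasureTheory.integral_indicator measurableSet_Iic,
    Measure.restrict_restrict measurableSet_Iic, Set.inter_comm, Set.Ioc_inter_Iic]

theorem integral_mul_exp_sub_exp (γ c t : ℝ) :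
    ∫ τ in (0:ℝ)..t, γ * (exp c - exp τ) = γ * (t * exp c - exp t + 1) := by
  rw [intervalIntegral.integral_const_mul, intervalIntegral.integral_sub intervalIntegrable_const
    (continuous_exp.intervalIntegrable 0 t), integral_exp]
  simp only [intervalIntegral.integral_const, sub_zero, smul_eq_mul, exp_zero]
  ring

section SwitchingTime

variable {γ t₀ : ℝ}

theorem mul_mul_exp_sub_exp_add_one_eq_one (hγ : γ ≠ 0)
    (heq : (t₀ - 1) * exp t₀ = 1 / γ - 1) : γ * (t₀ * exp t₀ - exp t₀ + 1) = 1 := by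
  calc γ * (t₀ * exp t₀ - exp t₀ + 1) = γ * ((t₀ - 1) * exp t₀ + 1) := by ring
    _ = 1 := by rw [heq]; field_simp; ring

theorem neg_one_add_mul_mul_exp_sub_exp_add_one_nonpos (hγ : 0 < γ)
    (heq : (t₀ - 1) * exp t₀ = 1 / γ - 1) (m : ℝ) :
    -1 + γ * (m * exp t₀ - exp m + 1) ≤ 0 := by
  have hone := mul_mul_exp_sub_exp_add_one_eq_one hγ.ne' heq
  have htangent := Real.sub_add_one_mul_exp_le_exp t₀ m
  calc -1 + γ * (m * exp t₀ - exp m + 1) = γ * ((m - t₀ + 1) * exp t₀ - exp m) := by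
        linear_combination hone
    _ ≤ 0 := mul_nonpos_of_nonneg_of_nonpos hγ.le (by linarith)

end SwitchingTime

/-- With `t₀ > 0` solving `(t₀-1)e^{t₀} = 1/γ - 1`,
`uhat(t) = γ(e^{t₀} - e^t)` for `t ≤ t₀` and `0` for `t > t₀`, and the state
`yhat(t) = e^t(-1 + ∫₀^t uhat)`, one has: for `t ∈ (0, t₀)`,
`yhat(t) = γ t e^{t+t₀} - γ e^{2t} + (γ-1)e^t ≤ 0`; for `t ≥ t₀`, `yhat(t) = 0`;
and `yhat(t) ≤ 0` for all `t ≥ 0`. -/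
theorem stmt_3 (γ t₀ : ℝ) (hγ : 0 < γ) (ht₀ : 0 < t₀)
    (heq : (t₀ - 1) * Real.exp t₀ = 1 / γ - 1)
    (uhat : ℝ → ℝ)
    (huhat : ∀ t, uhat t = if t ≤ t₀ then γ * (Real.exp t₀ - Real.exp t) else 0)
    (yhat : ℝ → ℝ)
    (hyhat : ∀ t, yhat t = Real.exp t * (-1 + ∫ τ in (0:ℝ)..t, uhat τ)) :
    (∀ t ∈ Set.Ioo (0:ℝ) t₀,
        yhat t = γ * t * Real.exp (t + t₀) - γ * Real.exp (2 * t)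
          + (γ - 1) * Real.exp t ∧ yhat t ≤ 0) ∧
    (∀ t, t₀ ≤ t → yhat t = 0) ∧
    (∀ t, 0 ≤ t → yhat t ≤ 0) := by
  have hu : uhat = (Set.Iic t₀).indicator fun τ => γ * (exp t₀ - exp τ) := by
    funext t
    simp only [huhat, Set.indicator_apply, Set.mem_Iic]
  have hy : ∀ t, 0 ≤ t →
      yhat t = exp t * (-1 + γ * (min t t₀ * exp t₀ - exp (min t t₀) + 1)) := by
    intro t ht
    rw [hyhat, hu, integral_indicator_Iic _ ht ht₀.le, integral_mul_exp_sub_exp]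
  have hnonpos : ∀ t, 0 ≤ t → yhat t ≤ 0 := fun t ht =>
    (hy t ht).trans_le <| mul_nonpos_of_nonneg_of_nonpos (exp_pos t).le <|
      neg_one_add_mul_mul_exp_sub_exp_add_one_nonpos hγ heq (min t t₀)
  refine ⟨fun t ht => ⟨?_, hnonpos t ht.1.le⟩, fun t ht => ?_, hnonpos⟩
  · rw [hy t ht.1.le, min_eq_left ht.2.le, exp_add, two_mul, exp_add]
    ring
  · rw [hy t (ht₀.le.trans ht), min_eq_right ht, mul_mul_exp_sub_exp_add_one_eq_one hγ.ne' heq]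
    ring
end

section
/- Let γ > 0, let t₀ > 0 satisfy (t₀ - 1)e^{t₀} = 1/γ - 1, let T > t₀ satisfy γ e^T ≥ 1 + γ e^{t₀}, and let û(t) = γ(e^{t₀} - e^t) for t ∈ (0,t₀], û(t) = 0 for t > t₀. For u ∈ L²(0,T) define J(u) = (γ e^T - 1)·(1 - ∫₀^T u) + ∫₀^T [½ u(t)² + γ e^t u(t)] dt + 1 - γ. Then for every δ ∈ L²(0,T) with ∫₀^T δ(τ) dτ ≤ 0 and δ(t) ≥ 0 for almost every t ∈ (t₀, T), one has J(û + δ) ≥ J(û) + (γ e^T - γ e^{t₀} - 1)·(-∫₀^T δ(τ) dτ) ≥ J(û). -/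
open MeasureTheory intervalIntegral

/-!
Expanding the square, `J (û + δ) - J û = -(γ e^T - 1) ∫ δ + ½ ∫ δ² + ∫ (û + γ eᵗ) δ`.
The switching function `û + γ eᵗ = max (γ e^{t₀}) (γ eᵗ)` equals `γ e^{t₀}` on `(0, t₀]` and is at
least `γ e^{t₀}` on `(t₀, T)`, where `δ ≥ 0`; hence `∫ (û + γ eᵗ) δ ≥ γ e^{t₀} ∫ δ`, and the claim
follows from `½ ∫ δ² ≥ 0`, `∫ δ ≤ 0` and `γ e^T - γ e^{t₀} - 1 ≥ 0`.
-/

section QuadraticExpansion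

variable {α : Type*} [MeasurableSpace α] {μ : Measure α} {f w δ : α → ℝ}

theorem integral_half_sq_add_mul_add (hf : MemLp f 2 μ) (hw : MemLp w 2 μ) (hδ : MemLp δ 2 μ) :
    ∫ x, (1 / 2 * (f x + δ x) ^ 2 + w x * (f x + δ x)) ∂μ
      = ∫ x, (1 / 2 * f x ^ 2 + w x * f x) ∂μ
        + (1 / 2 * ∫ x, δ x ^ 2 ∂μ + ∫ x, (f x + w x) * δ x ∂μ) := by
  have hsq : Integrable (fun x => 1 / 2 * δ x ^ 2) μ := hδ.integrable_sq.const_mul _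
  have hcross : Integrable (fun x => (f x + w x) * δ x) μ := (hf.add hw).integrable_mul hδ
  have hbase : Integrable (fun x => 1 / 2 * f x ^ 2 + w x * f x) μ :=
    (hf.integrable_sq.const_mul _).add (hw.integrable_mul hf)
  have hpert : Integrable (fun x => 1 / 2 * δ x ^ 2 + (f x + w x) * δ x) μ := hsq.add hcross
  rw [← MeasureTheory.integral_const_mul, ← integral_add hsq hcross, ← integral_add hbase hpert]
  congr 1
  funext x
  ring

end QuadraticExpansion

section ControlHat

open Real

noncomputable def controlHat (γ t₀ t : ℝ) : ℝ :=
  if t ≤ t₀ then γ * (exp t₀ - exp t) else 0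

variable {γ t₀ : ℝ}

theorem measurable_controlHat : Measurable (controlHat γ t₀) :=
  Measurable.ite measurableSet_Iic (by fun_prop) measurable_const

theorem controlHat_mem_Icc (hγ : 0 ≤ γ) (t : ℝ) : controlHat γ t₀ t ∈ Set.Icc 0 (γ * exp t₀) := by
  unfold controlHat
  split_ifs with h
  · have : exp t ≤ exp t₀ := exp_le_exp.mpr h
    constructor <;> nlinarith [exp_pos t]
  · exact ⟨le_rfl, by positivity⟩

theorem memLp_controlHat {μ : Measure ℝ} [IsFiniteMeasure μ] (hγ : 0 ≤ γ) (p : ENNReal) :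
    MemLp (controlHat γ t₀) p μ :=
  memLp_of_bounded (ae_of_all _ (controlHat_mem_Icc hγ))
    measurable_controlHat.aestronglyMeasurable p

theorem controlHat_add_mul_exp (hγ : 0 ≤ γ) (t : ℝ) :
    controlHat γ t₀ t + γ * exp t = max (γ * exp t₀) (γ * exp t) := by
  unfold controlHat
  split_ifs with h
  · rw [max_eq_left (by gcongr)]
    ring
  · rw [max_eq_right (by gcongr; exact (not_le.mp h).le)]
    ring

theorem mul_le_controlHat_add_mul_exp_mul (hγ : 0 ≤ γ) {t d : ℝ} (hd : t₀ < t → 0 ≤ d) :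
    γ * exp t₀ * d ≤ (controlHat γ t₀ t + γ * exp t) * d := by
  rw [controlHat_add_mul_exp hγ]
  by_cases h : t ≤ t₀
  · rw [max_eq_left (by gcongr)]
  · exact mul_le_mul_of_nonneg_right (le_max_left _ _) (hd (not_le.mp h))

end ControlHat

theorem stmt_5_general (γ t₀ T : ℝ) (hγ : 0 < γ) (ht₀ : 0 < t₀)
    (hT : t₀ < T)
    (hT' : 1 + γ * Real.exp t₀ ≤ γ * Real.exp T)
    (uhat : ℝ → ℝ)
    (huhat : ∀ t, uhat t = if t ≤ t₀ then γ * (Real.exp t₀ - Real.exp t) else 0)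
    (J : (ℝ → ℝ) → ℝ)
    (hJ : ∀ u : ℝ → ℝ,
      J u = (γ * Real.exp T - 1) * (1 - ∫ τ in (0:ℝ)..T, u τ)
        + (∫ t in (0:ℝ)..T, (1/2 * (u t)^2 + γ * Real.exp t * u t))
        + 1 - γ)
    (δ : ℝ → ℝ)
    (hδ : MemLp δ 2 (volume.restrict (Set.Ioc (0:ℝ) T)))
    (hδint : (∫ τ in (0:ℝ)..T, δ τ) ≤ 0)
    (hδpos : ∀ᵐ t ∂(volume.restrict (Set.Ioc t₀ T)), 0 ≤ δ t) :
    J (uhat + δ)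
      ≥ J uhat + (γ * Real.exp T - γ * Real.exp t₀ - 1)
          * (-∫ τ in (0:ℝ)..T, δ τ) ∧
    J uhat + (γ * Real.exp T - γ * Real.exp t₀ - 1)
        * (-∫ τ in (0:ℝ)..T, δ τ) ≥ J uhat := by
  obtain rfl : uhat = controlHat γ t₀ := funext huhat
  set μ := volume.restrict (Set.Ioc (0:ℝ) T)
  have h0T : 0 ≤ T := (ht₀.trans hT).le
  have hu : MemLp (controlHat γ t₀) 2 μ := memLp_controlHat hγ.le 2
  have hw : MemLp (fun t => γ * Real.exp t) 2 μ :=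
    (((Real.exp_monotone.monotoneOn _).memLp_isCompact isCompact_Icc).mono_measure
      (Measure.restrict_mono Set.Ioc_subset_Icc_self le_rfl)).const_mul γ
  have hswitch : γ * Real.exp t₀ * ∫ t, δ t ∂μ
      ≤ ∫ t, (controlHat γ t₀ t + γ * Real.exp t) * δ t ∂μ := by
    rw [← MeasureTheory.integral_const_mul]
    refine integral_mono_ae ((hδ.integrable one_le_two).const_mul _)
      ((hu.add hw).integrable_mul hδ) ?_
    filter_upwards [ae_restrict_mem measurableSet_Ioc,
      ae_restrict_of_ae ((ae_restrict_iff' measurableSet_Ioc).mp hδpos)] with t ht hδt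
    exact mul_le_controlHat_add_mul_exp_mul hγ.le fun h => hδt ⟨h, ht.2⟩
  have hexpand : J (controlHat γ t₀ + δ) = J (controlHat γ t₀)
      - (γ * Real.exp T - 1) * ∫ t, δ t ∂μ
      + (1 / 2 * ∫ t, δ t ^ 2 ∂μ + ∫ t, (controlHat γ t₀ t + γ * Real.exp t) * δ t ∂μ) := by
    simp only [hJ, integral_of_le h0T, Pi.add_apply]
    rw [integral_add (hu.integrable one_le_two) (hδ.integrable one_le_two),
      integral_half_sq_add_mul_add hu hw hδ]
    ring
  have hsq : 0 ≤ ∫ t, δ t ^ 2 ∂μ := integral_nonneg fun t => sq_nonneg _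
  have hcoef : 0 ≤ γ * Real.exp T - γ * Real.exp t₀ - 1 := by linarith
  rw [integral_of_le h0T] at hδint ⊢
  exact ⟨by linarith, le_add_of_nonneg_right (mul_nonneg hcoef (neg_nonneg.mpr hδint))⟩

/-- With `t₀ > 0` solving `(t₀-1)e^{t₀} = 1/γ - 1`, `T > t₀` with
`γe^T ≥ 1 + γe^{t₀}`, `uhat` the candidate optimal control and
`J(u) = (γe^T - 1)(1 - ∫₀^T u) + ∫₀^T [½u² + γe^t u] + 1 - γ` the reduced
objective, every perturbation `δ ∈ L²(0,T)` with `∫₀^T δ ≤ 0` and `δ ≥ 0`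
a.e. on `(t₀, T)` satisfies
`J(uhat + δ) ≥ J(uhat) + (γe^T - γe^{t₀} - 1)(-∫₀^T δ) ≥ J(uhat)`. -/
theorem stmt_5 (γ t₀ T : ℝ) (hγ : 0 < γ) (ht₀ : 0 < t₀)
    (heq : (t₀ - 1) * Real.exp t₀ = 1 / γ - 1)
    (hT : t₀ < T)
    (hT' : 1 + γ * Real.exp t₀ ≤ γ * Real.exp T)
    (uhat : ℝ → ℝ)
    (huhat : ∀ t, uhat t = if t ≤ t₀ then γ * (Real.exp t₀ - Real.exp t) else 0)
    (J : (ℝ → ℝ) → ℝ)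
    (hJ : ∀ u : ℝ → ℝ,
      J u = (γ * Real.exp T - 1) * (1 - ∫ τ in (0:ℝ)..T, u τ)
        + (∫ t in (0:ℝ)..T, (1/2 * (u t)^2 + γ * Real.exp t * u t))
        + 1 - γ)
    (δ : ℝ → ℝ)
    (hδ : MemLp δ 2 (volume.restrict (Set.Ioc (0:ℝ) T)))
    (hδint : (∫ τ in (0:ℝ)..T, δ τ) ≤ 0)
    (hδpos : ∀ᵐ t ∂(volume.restrict (Set.Ioc t₀ T)), 0 ≤ δ t) :
    J (uhat + δ)
      ≥ J uhat + (γ * Real.exp T - γ * Real.exp t₀ - 1)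
          * (-∫ τ in (0:ℝ)..T, δ τ) ∧
    J uhat + (γ * Real.exp T - γ * Real.exp t₀ - 1)
        * (-∫ τ in (0:ℝ)..T, δ τ) ≥ J uhat :=
  stmt_5_general γ t₀ T hγ ht₀ hT hT' uhat huhat J hJ δ hδ hδint hδpos
end

section
/- Let γ > 0, let t₀ > 0 satisfy (t₀ - 1)e^{t₀} = 1/γ - 1, and let T > t₀ satisfy γ e^T ≥ 1 + γ e^{t₀}. Define û(t) = γ(e^{t₀} - e^t) for t ∈ (0, t₀] and û(t) = 0 for t > t₀. Then û is the unique minimizer over u ∈ L²(0,T) of the functional ∫₀^T [½|u(t)|² + |u(t)| + γ|y(t)|] dt, where y(t) = e^t(-1 + ∫₀^t u(τ) dτ). Moreover the optimal state ŷ generated by û satisfies ŷ(t) = 0 for all t ∈ [t₀, T]. -/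
/-!
Choose a multiplier `W` with `|W| ≤ 1` and `W ŷ = |ŷ|` (namely `W = -1` on `[0, t₀]`, where
`ŷ < 0`, and a constant on `(t₀, T]`, where `ŷ = 0`), and let `p(τ) = γ ∫_τ^T W e^t` be the
adjoint state. Fubini gives `γ ∫ W y_u = ∫ p u - γ ∫ W e^t`, hence
`J(u) ≥ ∫ (½u² + |u| + p u) - γ ∫ W e^t`, with equality at `û`. The integrand
`½v² + |v| + p v` is `1`-strongly convex in `v` and minimized at `û`, because `-(p + û)` is a
subgradient of `|·|` at `û`; so `J(u) ≥ J(û) + ½ ‖u - û‖²`.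
-/

open MeasureTheory intervalIntegral Real Set

theorem integral_mul_primitive_swap {a b : ℝ} (hab : a ≤ b) {g u : ℝ → ℝ}
    (hg : IntervalIntegrable g volume a b) (hu : IntervalIntegrable u volume a b) :
    ∫ t in a..b, g t * ∫ τ in a..t, u τ = ∫ τ in a..b, (∫ t in τ..b, g t) * u τ := by
  rw [intervalIntegrable_iff_integrableOn_Ioc_of_le hab] at hg hu
  set F : ℝ × ℝ → ℝ := {p | p.2 < p.1}.indicator fun p => g p.1 * u p.2
  have hF : Integrable F ((volume.restrict (Ioc a b)).prod (volume.restrict (Ioc a b))) :=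
    (hg.mul_prod hu).indicator (measurableSet_lt measurable_snd measurable_fst)
  rw [integral_of_le hab, integral_of_le hab]
  calc ∫ t in Ioc a b, g t * ∫ τ in a..t, u τ
      = ∫ t in Ioc a b, ∫ τ in Ioc a b, F (t, τ) := by
        refine setIntegral_congr_fun measurableSet_Ioc fun t ht => ?_
        have hIoo : Ioo a t = Ioc a b ∩ Iio t := by
          ext; simp only [mem_inter_iff, mem_Ioc, mem_Iio, mem_Ioo]; grind
        rw [integral_of_le ht.1.le, integral_Ioc_eq_integral_Ioo, hIoo,
          ← setIntegral_indicator measurableSet_Iio, ← MeasureTheory.integral_const_mul]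
        refine integral_congr_ae (.of_forall fun τ => ?_)
        by_cases h : τ < t <;> simp [F, h]
    _ = ∫ τ in Ioc a b, ∫ t in Ioc a b, F (t, τ) := integral_integral_swap hF
    _ = ∫ τ in Ioc a b, (∫ t in τ..b, g t) * u τ := by
        refine setIntegral_congr_fun measurableSet_Ioc fun τ hτ => ?_
        have hIoc : Ioc τ b = Ioc a b ∩ Ioi τ := by
          rw [Ioc_inter_Ioi, max_eq_right hτ.1.le]
        rw [integral_of_le hτ.2, hIoc, ← setIntegral_indicator measurableSet_Ioi,
          ← MeasureTheory.integral_mul_const]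
        refine integral_congr_ae (.of_forall fun t => ?_)
        by_cases h : τ < t <;> simp [F, h]

section L2

variable {T : ℝ} {u : ℝ → ℝ}

theorem MeasureTheory.MemLp.intervalIntegrable (hT : 0 ≤ T)
    (hu : MemLp u 2 (volume.restrict (Ioc 0 T))) :
    IntervalIntegrable u volume 0 T :=
  (intervalIntegrable_iff_integrableOn_Ioc_of_le hT).2 (hu.integrable one_le_two)

theorem MeasureTheory.MemLp.intervalIntegrable_sq (hT : 0 ≤ T)
    (hu : MemLp u 2 (volume.restrict (Ioc 0 T))) :
    IntervalIntegrable (fun t => u t ^ 2) volume 0 T :=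
  (intervalIntegrable_iff_integrableOn_Ioc_of_le hT).2 hu.integrable_sq

theorem ae_eq_of_integral_sq_sub_nonpos (hT : 0 ≤ T) {v : ℝ → ℝ}
    (hu : MemLp u 2 (volume.restrict (Ioc 0 T))) (hv : MemLp v 2 (volume.restrict (Ioc 0 T)))
    (h : ∫ t in 0..T, (u t - v t) ^ 2 ≤ 0) : u =ᵐ[volume.restrict (Ioc 0 T)] v := by
  have hsq : ∫ t in 0..T, (u t - v t) ^ 2 = 0 :=
    le_antisymm h (intervalIntegral.integral_nonneg hT fun t _ => sq_nonneg _)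
  have hint : IntervalIntegrable (fun t => (u t - v t) ^ 2) volume 0 T :=
    (hu.sub hv).intervalIntegrable_sq hT
  rw [integral_eq_zero_iff_of_le_of_nonneg_ae hT (.of_forall fun t => sq_nonneg _) hint] at hsq
  filter_upwards [hsq] with t ht
  simpa [sub_eq_zero] using ht

end L2

noncomputable def expState (u : ℝ → ℝ) (t : ℝ) : ℝ := exp t * (-1 + ∫ τ in (0:ℝ)..t, u τ)

noncomputable def adjointState (γ T : ℝ) (W : ℝ → ℝ) (τ : ℝ) : ℝ := γ * ∫ t in τ..T, W t * exp t

section Duality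

variable {γ T : ℝ} {W u : ℝ → ℝ}

theorem continuousOn_expState (hu : IntervalIntegrable u volume 0 T) :
    ContinuousOn (expState u) (uIcc 0 T) :=
  continuous_exp.continuousOn.mul
    (continuousOn_const.add (continuousOn_primitive_interval' hu left_mem_uIcc))

theorem continuousOn_adjointState (hW : IntervalIntegrable W volume 0 T) :
    ContinuousOn (adjointState γ T W) (uIcc 0 T) :=
  continuousOn_const.mul <| continuousOn_primitive_interval_left <|
    (intervalIntegrable_iff' enorm_ne_top).1 (hW.mul_continuousOn continuous_exp.continuousOn)

theorem integral_mul_expState (hT : 0 ≤ T) (hW : IntervalIntegrable W volume 0 T)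
    (hu : IntervalIntegrable u volume 0 T) :
    γ * ∫ t in 0..T, W t * expState u t
      = (∫ τ in 0..T, adjointState γ T W τ * u τ) - γ * ∫ t in 0..T, W t * exp t := by
  have hWexp : IntervalIntegrable (fun t => W t * exp t) volume 0 T :=
    hW.mul_continuousOn continuous_exp.continuousOn
  have hWexpU : IntervalIntegrable (fun t => W t * exp t * ∫ τ in 0..t, u τ) volume 0 T :=
    hWexp.mul_continuousOn (continuousOn_primitive_interval' hu left_mem_uIcc)
  have hswap := integral_mul_primitive_swap hT hWexp hu
  simp only [adjointState, mul_assoc, intervalIntegral.integral_const_mul, ← mul_sub]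
  rw [← hswap, ← intervalIntegral.integral_sub hWexpU hWexp]
  congr 2; ext t; simp only [expState]; ring

end Duality

theorem half_sq_add_abs_add_mul_le {b w : ℝ} (hb : |b + w| ≤ 1) (hbw : -(b + w) * w = |w|)
    (v : ℝ) : 1/2 * w^2 + |w| + b * w + 1/2 * (v - w)^2 ≤ 1/2 * v^2 + |v| + b * v := by
  have hv : -|v| ≤ (b + w) * v :=
    calc -|v| ≤ -(|b + w| * |v|) := by nlinarith [abs_nonneg v]
      _ = -|(b + w) * v| := by rw [abs_mul]
      _ ≤ (b + w) * v := neg_abs_le _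
  nlinarith

noncomputable def cost (γ T : ℝ) (u : ℝ → ℝ) : ℝ :=
  ∫ t in (0:ℝ)..T, (1/2 * |u t|^2 + |u t| + γ * |expState u t|)

section Verification

variable {γ T : ℝ} {W v : ℝ → ℝ}

theorem intervalIntegrable_lagrangian (hT : 0 ≤ T) (hW : IntervalIntegrable W volume 0 T)
    (hv : MemLp v 2 (volume.restrict (Ioc 0 T))) :
    IntervalIntegrable (fun t => 1/2 * v t^2 + |v t| + adjointState γ T W t * v t) volume 0 T :=
  ((hv.intervalIntegrable_sq hT).const_mul _).add (hv.intervalIntegrable hT).abs |>.add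
    ((hv.intervalIntegrable hT).continuousOn_mul (continuousOn_adjointState hW))

theorem cost_eq_lagrangian_add (hT : 0 ≤ T) (hW : IntervalIntegrable W volume 0 T)
    (hv : MemLp v 2 (volume.restrict (Ioc 0 T))) :
    cost γ T v = (∫ t in 0..T, (1/2 * v t^2 + |v t| + adjointState γ T W t * v t))
      - γ * (∫ t in 0..T, W t * exp t)
      + γ * ∫ t in 0..T, (|expState v t| - W t * expState v t) := by
  have hv1 := hv.intervalIntegrable hT
  have hy := continuousOn_expState hv1
  have hA : IntervalIntegrable (fun t => 1/2 * v t^2 + |v t|) volume 0 T :=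
    ((hv.intervalIntegrable_sq hT).const_mul _).add hv1.abs
  have hy_abs : IntervalIntegrable (fun t => |expState v t|) volume 0 T :=
    hy.abs.intervalIntegrable
  simp only [cost, sq_abs]
  rw [intervalIntegral.integral_add hA (hy_abs.const_mul γ),
    intervalIntegral.integral_add hA (hv1.continuousOn_mul (continuousOn_adjointState hW)),
    intervalIntegral.integral_sub hy_abs (hW.mul_continuousOn hy), mul_sub,
    integral_mul_expState hT hW hv1, intervalIntegral.integral_const_mul]
  ring

theorem cost_add_half_integral_sq_le (hγ : 0 ≤ γ) (hT : 0 ≤ T)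
    (hW : IntervalIntegrable W volume 0 T) (hW1 : ∀ t ∈ Icc 0 T, |W t| ≤ 1) {uhat u : ℝ → ℝ}
    (huhat : MemLp uhat 2 (volume.restrict (Ioc 0 T)))
    (hopt : ∀ t ∈ Icc 0 T, |adjointState γ T W t + uhat t| ≤ 1 ∧
      -(adjointState γ T W t + uhat t) * uhat t = |uhat t|)
    (hcompl : ∀ t ∈ Icc 0 T, W t * expState uhat t = |expState uhat t|)
    (hu : MemLp u 2 (volume.restrict (Ioc 0 T))) :
    cost γ T uhat + 1/2 * ∫ t in 0..T, (u t - uhat t)^2 ≤ cost γ T u := by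
  have hres_uhat : ∫ t in 0..T, (|expState uhat t| - W t * expState uhat t) = 0 := by
    rw [intervalIntegral.integral_congr (g := fun _ => 0) fun t ht => by
      rw [uIcc_of_le hT] at ht; simp [hcompl t ht]]
    simp
  have hres_u : 0 ≤ ∫ t in 0..T, (|expState u t| - W t * expState u t) :=
    intervalIntegral.integral_nonneg hT fun t ht => sub_nonneg.2 <|
      calc W t * expState u t ≤ |W t| * |expState u t| := by rw [← abs_mul]; exact le_abs_self _
        _ ≤ |expState u t| := mul_le_of_le_one_left (abs_nonneg _) (hW1 t ht)
  have hsq : IntervalIntegrable (fun t => (u t - uhat t)^2) volume 0 T :=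
    (hu.sub huhat).intervalIntegrable_sq hT
  have hlagr : (∫ t in 0..T, (1/2 * uhat t^2 + |uhat t| + adjointState γ T W t * uhat t))
      + 1/2 * ∫ t in 0..T, (u t - uhat t)^2
      ≤ ∫ t in 0..T, (1/2 * u t^2 + |u t| + adjointState γ T W t * u t) := by
    rw [← intervalIntegral.integral_const_mul, ← intervalIntegral.integral_add
      (intervalIntegrable_lagrangian hT hW huhat) (hsq.const_mul _)]
    exact intervalIntegral.integral_mono_on hT
      ((intervalIntegrable_lagrangian hT hW huhat).add (hsq.const_mul _))
      (intervalIntegrable_lagrangian hT hW hu)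
      fun t ht => half_sq_add_abs_add_mul_le (hopt t ht).1 (hopt t ht).2 (u t)
  rw [cost_eq_lagrangian_add hT hW huhat, cost_eq_lagrangian_add hT hW hu, hres_uhat]
  linarith [mul_nonneg hγ hres_u]

end Verification

noncomputable def optControl (γ t₀ t : ℝ) : ℝ := if t ≤ t₀ then γ * (exp t₀ - exp t) else 0

-- The constant on `(t₀, T]` makes the adjoint state equal `-1 = -û(t₀) - 1` at `t₀`; it lies
-- in `[-1, 0)` exactly when `γ (e^T - e^{t₀}) ≥ 1`.
noncomputable def multiplier (γ t₀ T t : ℝ) : ℝ :=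
  if t ≤ t₀ then -1 else -(γ * (exp T - exp t₀))⁻¹

section ExplicitSolution

variable {γ t₀ T : ℝ}

theorem continuous_optControl : Continuous (optControl γ t₀) :=
  Continuous.if_le (by fun_prop) continuous_const continuous_id continuous_const
    fun t ht => by simp [ht]

theorem optControl_nonneg (hγ : 0 ≤ γ) (t : ℝ) : 0 ≤ optControl γ t₀ t := by
  unfold optControl
  split_ifs with ht
  · exact mul_nonneg hγ (sub_nonneg.2 (exp_le_exp.2 ht))
  · rfl

theorem optControl_le (hγ : 0 ≤ γ) (t : ℝ) : optControl γ t₀ t ≤ γ * exp t₀ := by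
  unfold optControl
  split_ifs
  · nlinarith [exp_pos t]
  · positivity

theorem memLp_optControl (hγ : 0 ≤ γ) : MemLp (optControl γ t₀) 2 (volume.restrict (Ioc 0 T)) :=
  .of_bound continuous_optControl.aestronglyMeasurable _ <| .of_forall fun t => by
    rw [Real.norm_of_nonneg (optControl_nonneg hγ t)]
    exact optControl_le hγ t

theorem integral_optControl_of_mem_Icc {t : ℝ} (ht : t ∈ Icc 0 t₀) :
    ∫ τ in 0..t, optControl γ t₀ τ = γ * (t * exp t₀ - exp t + 1) := by
  have hτ : EqOn (optControl γ t₀) (fun τ => γ * exp t₀ - γ * exp τ) (uIcc 0 t) := fun τ hτ => by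
    rw [uIcc_of_le ht.1] at hτ
    simp [optControl, hτ.2.trans ht.2, mul_sub]
  rw [intervalIntegral.integral_congr hτ]
  simp [integral_exp]
  ring

theorem integral_optControl_of_ge (hγ : 0 < γ) (ht₀ : 0 ≤ t₀)
    (heq : (t₀ - 1) * exp t₀ = 1 / γ - 1) {t : ℝ} (ht : t₀ ≤ t) :
    ∫ τ in 0..t, optControl γ t₀ τ = 1 := by
  have hzero : EqOn (optControl γ t₀) 0 (uIoc t₀ t) := fun τ hτ => by
    rw [uIoc_of_le ht] at hτ
    simp [optControl, not_le.2 hτ.1]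
  rw [← integral_add_adjacent_intervals (continuous_optControl.intervalIntegrable 0 t₀)
    (continuous_optControl.intervalIntegrable t₀ t), integral_optControl_of_mem_Icc ⟨ht₀, le_rfl⟩,
    intervalIntegral.integral_congr_ae (.of_forall fun τ hτ => hzero hτ)]
  have hU₀ : γ * (t₀ * exp t₀ - exp t₀ + 1) = 1 := by
    rw [show t₀ * exp t₀ - exp t₀ + 1 = 1 / γ by linarith]
    field_simp
  simp [hU₀]

theorem expState_optControl_of_ge (hγ : 0 < γ) (ht₀ : 0 ≤ t₀)
    (heq : (t₀ - 1) * exp t₀ = 1 / γ - 1) {t : ℝ} (ht : t₀ ≤ t) :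
    expState (optControl γ t₀) t = 0 := by
  simp [expState, integral_optControl_of_ge hγ ht₀ heq ht]

theorem expState_optControl_nonpos (hγ : 0 < γ) (heq : (t₀ - 1) * exp t₀ = 1 / γ - 1) {t : ℝ}
    (ht : t ∈ Icc 0 t₀) : expState (optControl γ t₀) t ≤ 0 := by
  have hconv : exp t₀ * (t - t₀ + 1) ≤ exp t := by
    simpa [← exp_add] using mul_le_mul_of_nonneg_left (add_one_le_exp (t - t₀)) (exp_pos t₀).le
  have hU : γ * (t * exp t₀ - exp t + 1) ≤ 1 := by
    calc γ * (t * exp t₀ - exp t + 1) ≤ γ * (t₀ * exp t₀ - exp t₀ + 1) :=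
          mul_le_mul_of_nonneg_left (by linarith) hγ.le
      _ = 1 := by rw [show t₀ * exp t₀ - exp t₀ + 1 = 1 / γ by linarith]; field_simp
  rw [expState, integral_optControl_of_mem_Icc ht]
  exact mul_nonpos_of_nonneg_of_nonpos (exp_pos t).le (by linarith)

theorem abs_multiplier_le_one (hT' : 1 + γ * exp t₀ ≤ γ * exp T) (t : ℝ) :
    |multiplier γ t₀ T t| ≤ 1 := by
  unfold multiplier
  split_ifs
  · simp
  · rw [abs_neg, abs_inv]
    exact inv_le_one_of_one_le₀ (by rw [abs_of_pos (by linarith)]; linarith)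

theorem monotone_multiplier (hT' : 1 + γ * exp t₀ ≤ γ * exp T) :
    Monotone (multiplier γ t₀ T) := by
  intro s t hst
  have := (abs_le.1 (abs_multiplier_le_one hT' t)).1
  unfold multiplier at this ⊢
  split_ifs at this ⊢ <;> first | rfl | linarith

theorem adjointState_multiplier_of_ge (hγ : 0 < γ) (hT : t₀ < T) {τ : ℝ} (hτ : t₀ ≤ τ) :
    adjointState γ T (multiplier γ t₀ T) τ = -((exp T - exp τ) / (exp T - exp t₀)) := by
  have hW : ∀ t ∈ uIoc τ T, multiplier γ t₀ T t = -(γ * (exp T - exp t₀))⁻¹ := fun t ht => by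
    simp [multiplier, not_le.2 (lt_of_le_of_lt (le_min hτ hT.le) ht.1)]
  rw [adjointState, intervalIntegral.integral_congr_ae (.of_forall fun t ht => by rw [hW t ht]),
    intervalIntegral.integral_const_mul, integral_exp]
  field_simp

theorem adjointState_multiplier_of_le (hγ : 0 < γ) (hT : t₀ < T)
    (hT' : 1 + γ * exp t₀ ≤ γ * exp T) {τ : ℝ} (hτ : τ ≤ t₀) :
    adjointState γ T (multiplier γ t₀ T) τ = -optControl γ t₀ τ - 1 := by
  have hWexp : ∀ a b, IntervalIntegrable (fun t => multiplier γ t₀ T t * exp t) volume a b :=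
    fun a b => (monotone_multiplier hT').intervalIntegrable.mul_continuousOn
      continuous_exp.continuousOn
  have hW : EqOn (multiplier γ t₀ T) (fun _ => -1) (uIcc τ t₀) := fun t ht => by
    rw [uIcc_of_le hτ] at ht
    simp [multiplier, ht.2]
  have hp₀ : γ * ∫ t in t₀..T, multiplier γ t₀ T t * exp t = -1 := by
    rw [← adjointState, adjointState_multiplier_of_ge hγ hT le_rfl,
      div_self (sub_pos.2 (exp_lt_exp.2 hT)).ne']
  rw [adjointState, ← integral_add_adjacent_intervals (hWexp τ t₀) (hWexp t₀ T), mul_add, hp₀,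
    intervalIntegral.integral_congr fun t ht => by rw [hW ht]]
  simp [optControl, hτ, integral_exp]
  ring

theorem adjointState_add_optControl (hγ : 0 < γ) (hT : t₀ < T) (hT' : 1 + γ * exp t₀ ≤ γ * exp T)
    {t : ℝ} (ht : t ≤ T) :
    |adjointState γ T (multiplier γ t₀ T) t + optControl γ t₀ t| ≤ 1 ∧
      -(adjointState γ T (multiplier γ t₀ T) t + optControl γ t₀ t) * optControl γ t₀ t =
        |optControl γ t₀ t| := by
  rcases le_or_gt t t₀ with h | h
  · rw [adjointState_multiplier_of_le hγ hT hT' h, abs_of_nonneg (optControl_nonneg hγ.le t),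
      show -optControl γ t₀ t - 1 + optControl γ t₀ t = -1 by ring]
    simp
  · have hD : 0 < exp T - exp t₀ := sub_pos.2 (exp_lt_exp.2 hT)
    have hq : (exp T - exp t) / (exp T - exp t₀) ≤ 1 :=
      div_le_one_of_le₀ (by linarith [exp_lt_exp.2 h]) hD.le
    have hq' : 0 ≤ (exp T - exp t) / (exp T - exp t₀) :=
      div_nonneg (sub_nonneg.2 (exp_le_exp.2 ht)) hD.le
    simp [optControl, not_le.2 h, adjointState_multiplier_of_ge hγ hT h.le, abs_of_nonneg hq', hq]

theorem multiplier_mul_expState_optControl (hγ : 0 < γ) (ht₀ : 0 ≤ t₀)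
    (heq : (t₀ - 1) * exp t₀ = 1 / γ - 1) {t : ℝ} (ht : 0 ≤ t) :
    multiplier γ t₀ T t * expState (optControl γ t₀) t = |expState (optControl γ t₀) t| := by
  rcases le_or_gt t t₀ with h | h
  · simp [multiplier, h, abs_of_nonpos (expState_optControl_nonpos hγ heq ⟨ht, h⟩)]
  · simp [expState_optControl_of_ge hγ ht₀ heq h.le]

end ExplicitSolution

/-- With `t₀ > 0` solving `(t₀-1)e^{t₀} = 1/γ - 1` and `T > t₀`
with `γe^T ≥ 1 + γe^{t₀}`, the control `uhat(t) = γ(e^{t₀} - e^t)` for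
`t ≤ t₀`, `uhat(t) = 0` for `t > t₀`, is the unique (up to a.e. equality)
minimizer over `u ∈ L²(0,T)` of `∫₀^T [½|u|² + |u| + γ|y|] dt`, where
`y(t) = e^t(-1 + ∫₀^t u)`; moreover the state generated by `uhat` vanishes on
`[t₀, T]`. -/
theorem stmt_6 (γ t₀ T : ℝ) (hγ : 0 < γ) (ht₀ : 0 < t₀)
    (heq : (t₀ - 1) * Real.exp t₀ = 1 / γ - 1)
    (hT : t₀ < T)
    (hT' : 1 + γ * Real.exp t₀ ≤ γ * Real.exp T)
    (uhat : ℝ → ℝ)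
    (huhat : ∀ t, uhat t = if t ≤ t₀ then γ * (Real.exp t₀ - Real.exp t) else 0)
    (J : (ℝ → ℝ) → ℝ)
    (hJ : ∀ u : ℝ → ℝ,
      J u = ∫ t in (0:ℝ)..T,
        (1/2 * |u t|^2 + |u t|
          + γ * |Real.exp t * (-1 + ∫ τ in (0:ℝ)..t, u τ)|)) :
    (∀ u : ℝ → ℝ, MemLp u 2 (volume.restrict (Set.Ioc (0:ℝ) T)) →
      J uhat ≤ J u) ∧
    (∀ u : ℝ → ℝ, MemLp u 2 (volume.restrict (Set.Ioc (0:ℝ) T)) →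
      J u = J uhat → u =ᵐ[volume.restrict (Set.Ioc (0:ℝ) T)] uhat) ∧
    (∀ t ∈ Set.Icc t₀ T,
      Real.exp t * (-1 + ∫ τ in (0:ℝ)..t, uhat τ) = 0) := by
  obtain rfl : uhat = optControl γ t₀ := funext huhat
  obtain rfl : J = cost γ T := funext hJ
  have hT₀ : 0 ≤ T := ht₀.le.trans hT.le
  have hmin : ∀ u, MemLp u 2 (volume.restrict (Ioc 0 T)) →
      cost γ T (optControl γ t₀) + 1/2 * ∫ t in 0..T, (u t - optControl γ t₀ t)^2 ≤ cost γ T u :=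
    fun u hu => cost_add_half_integral_sq_le hγ.le hT₀
      (monotone_multiplier hT').intervalIntegrable (fun t _ => abs_multiplier_le_one hT' t)
      (memLp_optControl hγ.le) (fun t ht => adjointState_add_optControl hγ hT hT' ht.2)
      (fun t ht => multiplier_mul_expState_optControl hγ ht₀.le heq ht.1) hu
  refine ⟨fun u hu => ?_, fun u hu hJu => ?_,
    fun t ht => expState_optControl_of_ge hγ ht₀.le heq ht.1⟩
  · have hsq : 0 ≤ ∫ t in 0..T, (u t - optControl γ t₀ t)^2 :=
      intervalIntegral.integral_nonneg hT₀ fun t _ => sq_nonneg _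
    linarith [hmin u hu]
  · refine ae_eq_of_integral_sq_sub_nonpos hT₀ hu (memLp_optControl hγ.le) ?_
    linarith [hmin u hu]
end

section
/- Let f, g : [0,∞) → ℝ be continuous with f > 0 and g > 0, let T > 0, γ > 0 and α < 0, and set F(t) = exp(∫₀^t f(s) ds), H(t) = ∫₀^t F(τ) dτ. Let u ∈ L²(0,T) satisfy u(t) ≥ 0 almost everywhere and ∫₀^T u(τ) g(τ)/F(τ) dτ = -α, and let y(t) = F(t)[α + ∫₀^t (g(τ)/F(τ)) u(τ) dτ]. Then the following integration-by-parts identity holds: ∫₀^T [½ u(t)² + u(t) - γ y(t)] dt = ∫₀^T [½ u(t)² + u(t)·(1 + γ H(t) g(t)/F(t))] dt. -/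
/-!
Write `y = F · Φ` with `Φ(t) = α + ∫₀^t (g/F) u`. The moment condition says `Φ(T) = 0`, and
`H(0) = 0`, `H' = F`. Since `Φ` is only absolutely continuous, integration by parts in that
class gives `∫₀^T y = ∫₀^T H' Φ = -∫₀^T H Φ' = -∫₀^T u H g / F`, and the identity follows by
linearity of the integral.
-/

open MeasureTheory intervalIntegral

namespace IntervalIntegrable

variable {φ ψ : ℝ → ℝ} {a b : ℝ}

theorem absolutelyContinuousOnInterval_primitive (hφ : IntervalIntegrable φ volume a b) :
    AbsolutelyContinuousOnInterval (fun x ↦ ∫ t in a..x, φ t) a b :=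
  hφ.absolutelyContinuousOnInterval_intervalIntegral Set.left_mem_uIcc

theorem ae_deriv_primitive_eq (hφ : IntervalIntegrable φ volume a b) :
    ∀ᵐ x, x ∈ Set.uIoc a b → deriv (fun x ↦ ∫ t in a..x, φ t) x = φ x := by
  filter_upwards [hφ.ae_hasDerivAt_integral] with x hx hxab
  exact (hx (Set.uIoc_subset_uIcc hxab) a Set.left_mem_uIcc).deriv

theorem integral_primitive_mul (hφ : IntervalIntegrable φ volume a b)
    (hψ : IntervalIntegrable ψ volume a b) :
    ∫ x in a..b, (∫ t in a..x, φ t) * ψ x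
      = (∫ x in a..b, φ x) * (∫ x in a..b, ψ x) - ∫ x in a..b, φ x * ∫ t in a..x, ψ t := by
  have hparts := hφ.absolutelyContinuousOnInterval_primitive.integral_mul_deriv_eq_deriv_mul
    hψ.absolutelyContinuousOnInterval_primitive
  have hψ' : ∫ x in a..b, (∫ t in a..x, φ t) * deriv (fun x ↦ ∫ t in a..x, ψ t) x
      = ∫ x in a..b, (∫ t in a..x, φ t) * ψ x :=
    integral_congr_ae (hψ.ae_deriv_primitive_eq.mono fun x hx hxab ↦ by rw [hx hxab])
  have hφ' : ∫ x in a..b, deriv (fun x ↦ ∫ t in a..x, φ t) x * ∫ t in a..x, ψ t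
      = ∫ x in a..b, φ x * ∫ t in a..x, ψ t :=
    integral_congr_ae (hφ.ae_deriv_primitive_eq.mono fun x hx hxab ↦ by rw [hx hxab])
  simpa [hψ', hφ'] using hparts

theorem integral_mul_const_add_primitive {α : ℝ} (hφ : IntervalIntegrable φ volume a b)
    (hψ : IntervalIntegrable ψ volume a b) (hα : ∫ x in a..b, ψ x = -α) :
    ∫ x in a..b, φ x * (α + ∫ t in a..x, ψ t) = -∫ x in a..b, (∫ t in a..x, φ t) * ψ x := by
  have hcont : ContinuousOn (fun x ↦ ∫ t in a..x, ψ t) (Set.uIcc a b) :=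
    hψ.absolutelyContinuousOnInterval_primitive.continuousOn
  simp only [mul_add]
  rw [integral_add (hφ.mul_const α) (hφ.mul_continuousOn hcont),
    intervalIntegral.integral_mul_const, integral_primitive_mul hφ hψ, hα]
  ring

end IntervalIntegrable

theorem integral_state_eq_neg_integral_control_mul {F g u H y : ℝ → ℝ} {a b α : ℝ}
    (hF : IntervalIntegrable F volume a b)
    (hgF : ContinuousOn (fun t ↦ g t / F t) (Set.uIcc a b))
    (hu : IntervalIntegrable u volume a b)
    (hH : ∀ t, H t = ∫ τ in a..t, F τ)
    (hmom : ∫ τ in a..b, u τ * (g τ / F τ) = -α)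
    (hy : ∀ t, y t = F t * (α + ∫ τ in a..t, g τ / F τ * u τ)) :
    ∫ t in a..b, y t = -∫ t in a..b, u t * (H t * g t / F t) := calc
  ∫ t in a..b, y t = ∫ t in a..b, F t * (α + ∫ τ in a..t, g τ / F τ * u τ) :=
    integral_congr fun t _ ↦ hy t
  _ = -∫ t in a..b, (∫ τ in a..t, F τ) * (g t / F t * u t) :=
    hF.integral_mul_const_add_primitive (hu.continuousOn_mul hgF) <| by
      simpa only [mul_comm] using hmom
  _ = -∫ t in a..b, u t * (H t * g t / F t) := by
    congr 1
    exact integral_congr fun t _ ↦ by rw [hH t]; ring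

theorem integral_sub_mul_eq_integral_add_mul {A v w : ℝ → ℝ} {a b : ℝ}
    (hA : IntervalIntegrable A volume a b) (hv : IntervalIntegrable v volume a b)
    (hw : IntervalIntegrable w volume a b)
    (hvw : ∫ x in a..b, v x = -∫ x in a..b, w x) (c : ℝ) :
    ∫ x in a..b, (A x - c * v x) = ∫ x in a..b, (A x + c * w x) := by
  rw [integral_sub hA (hv.const_mul c), integral_add hA (hw.const_mul c),
    intervalIntegral.integral_const_mul, intervalIntegral.integral_const_mul, hvw]
  ring

theorem stmt_9_general (f g : ℝ → ℝ)
    (hf : ContinuousOn f (Set.Ici 0)) (hg : ContinuousOn g (Set.Ici 0))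
    (T γ α : ℝ) (hT : 0 < T)
    (F H : ℝ → ℝ)
    (hF : ∀ t, F t = Real.exp (∫ s in (0:ℝ)..t, f s))
    (hH : ∀ t, H t = ∫ τ in (0:ℝ)..t, F τ)
    (u : ℝ → ℝ)
    (hu : MemLp u 2 (volume.restrict (Set.Ioc (0:ℝ) T)))
    (hmom : ∫ τ in (0:ℝ)..T, u τ * (g τ / F τ) = -α)
    (y : ℝ → ℝ)
    (hy : ∀ t, y t = F t * (α + ∫ τ in (0:ℝ)..t, (g τ / F τ) * u τ)) :
    ∫ t in (0:ℝ)..T, (1/2 * (u t)^2 + u t - γ * y t)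
      = ∫ t in (0:ℝ)..T,
          (1/2 * (u t)^2 + u t * (1 + γ * (H t * g t / F t))) := by
  have hIcc : Set.uIcc 0 T ⊆ Set.Ici 0 := by
    rw [Set.uIcc_of_le hT.le]
    exact Set.Icc_subset_Ici_self
  have hFc : ContinuousOn F (Set.uIcc 0 T) :=
    (Real.continuous_exp.comp_continuousOn (continuousOn_primitive_interval'
      (hf.mono hIcc).intervalIntegrable Set.left_mem_uIcc)).congr fun t _ ↦ hF t
  have hHc : ContinuousOn H (Set.uIcc 0 T) :=
    (continuousOn_primitive_interval' hFc.intervalIntegrable Set.left_mem_uIcc).congr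
      fun t _ ↦ hH t
  have hF0 : ∀ t ∈ Set.uIcc 0 T, F t ≠ 0 := fun t _ ↦ by rw [hF t]; exact (Real.exp_pos _).ne'
  have hL1 {v : ℝ → ℝ} (hv : IntegrableOn v (Set.Ioc 0 T)) : IntervalIntegrable v volume 0 T :=
    (intervalIntegrable_iff_integrableOn_Ioc_of_le hT.le).2 hv
  have hu1 : IntervalIntegrable u volume 0 T := hL1 (hu.integrable one_le_two)
  have hgF : ContinuousOn (fun t ↦ g t / F t) (Set.uIcc 0 T) := (hg.mono hIcc).div hFc hF0
  have hyc : ContinuousOn y (Set.uIcc 0 T) :=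
    (hFc.mul (continuousOn_const.add (continuousOn_primitive_interval'
      (hu1.continuousOn_mul hgF) Set.left_mem_uIcc))).congr fun t _ ↦ hy t
  have hy_int :=
    integral_state_eq_neg_integral_control_mul hFc.intervalIntegrable hgF hu1 hH hmom hy
  calc ∫ t in (0:ℝ)..T, (1/2 * (u t)^2 + u t - γ * y t)
      = ∫ t in (0:ℝ)..T, (1/2 * (u t)^2 + u t + γ * (u t * (H t * g t / F t))) :=
        integral_sub_mul_eq_integral_add_mul ((hL1 hu.integrable_sq).const_mul _ |>.add hu1)
          hyc.intervalIntegrable (hu1.mul_continuousOn ((hHc.mul (hg.mono hIcc)).div hFc hF0))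
          hy_int γ
    _ = ∫ t in (0:ℝ)..T, (1/2 * (u t)^2 + u t * (1 + γ * (H t * g t / F t))) :=
        integral_congr fun t _ ↦ by ring

/-- For continuous positive `f, g`, `γ > 0`, `α < 0`, with
`F(t) = exp(∫₀^t f)`, `H(t) = ∫₀^t F`, and a control `u ∈ L²(0,T)` with
`u ≥ 0` a.e. and `∫₀^T u g/F = -α`, the state
`y(t) = F(t)(α + ∫₀^t (g/F)u)` satisfies the integration-by-parts identity
`∫₀^T [½u² + u - γy] = ∫₀^T [½u² + u(1 + γ H g/F)]`. -/
theorem stmt_9 (f g : ℝ → ℝ)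
    (hf : ContinuousOn f (Set.Ici 0)) (hg : ContinuousOn g (Set.Ici 0))
    (hfpos : ∀ t : ℝ, 0 ≤ t → 0 < f t) (hgpos : ∀ t : ℝ, 0 ≤ t → 0 < g t)
    (T γ α : ℝ) (hT : 0 < T) (hγ : 0 < γ) (hα : α < 0)
    (F H : ℝ → ℝ)
    (hF : ∀ t, F t = Real.exp (∫ s in (0:ℝ)..t, f s))
    (hH : ∀ t, H t = ∫ τ in (0:ℝ)..t, F τ)
    (u : ℝ → ℝ)
    (hu : MemLp u 2 (volume.restrict (Set.Ioc (0:ℝ) T)))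
    (hupos : ∀ᵐ t ∂(volume.restrict (Set.Ioc (0:ℝ) T)), 0 ≤ u t)
    (hmom : ∫ τ in (0:ℝ)..T, u τ * (g τ / F τ) = -α)
    (y : ℝ → ℝ)
    (hy : ∀ t, y t = F t * (α + ∫ τ in (0:ℝ)..t, (g τ / F τ) * u τ)) :
    ∫ t in (0:ℝ)..T, (1/2 * (u t)^2 + u t - γ * y t)
      = ∫ t in (0:ℝ)..T,
          (1/2 * (u t)^2 + u t * (1 + γ * (H t * g t / F t))) :=
  stmt_9_general f g hf hg T γ α hT F H hF hH u hu hmom y hy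
end

section
/- Let f, g : [0,∞) → ℝ be continuous with f > 0 and g > 0, let T > 0, γ ≥ 1, α < 0, λ > 0, and set F(t) = exp(∫₀^t f(s) ds), H(t) = ∫₀^t F(τ) dτ, û(t) = max{0, -1 - γ g(t)H(t)/F(t) + λ g(t)/F(t)}. Let t₀ ∈ (0,T] be such that û(t) = -1 - γ g(t)H(t)/F(t) + λ g(t)/F(t) for t ∈ [0, t₀], û(t) = 0 for t ∈ [t₀, T], and -1 - γ g(t)H(t)/F(t) + λ g(t)/F(t) ≤ 0 for t ∈ [t₀, T]. Then for every δ ∈ L²(0,T) with ∫₀^T δ(τ) g(τ)/F(τ) dτ = 0, û(t) + δ(t) ≥ 0 almost everywhere, and δ(t) ≥ 0 for almost every t ∈ [t₀, T], one has ∫₀^T [½(û+δ)(t)² + (û+δ)(t)·(1 + γ H(t) g(t)/F(t))] dt ≥ ∫₀^T [½ û(t)² + û(t)·(1 + γ H(t) g(t)/F(t))] dt, with the difference bounded below by ∫₀^T ½ δ(t)² dt. -/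
/-!
Expanding the square, `Jred (û + δ) - Jred û = ∫ ½ δ² + ∫ δ (û + c)` with `c = 1 + γ H g / F`.
Since `û ≥ -1 - γ g H / F + λ g / F`, the weight `û + c` dominates `λ g / F` everywhere, with
equality on `[0, t₀]`; as `δ ≥ 0` on `[t₀, T]`, this gives
`∫ δ (û + c) ≥ λ ∫ δ g / F = 0`.
-/

open MeasureTheory intervalIntegral Set

theorem continuousOn_primitive_of_continuousOn {a b : ℝ} {f : ℝ → ℝ} (hab : a ≤ b)
    (hf : ContinuousOn f (Icc a b)) : ContinuousOn (fun t => ∫ s in a..t, f s) (Icc a b) := by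
  rw [← uIcc_of_le hab] at hf ⊢
  exact continuousOn_primitive_interval hf.integrableOn_uIcc

theorem MeasureTheory.MemLp.intervalIntegrable_mul_continuousOn {a b : ℝ} {δ φ : ℝ → ℝ}
    (hab : a ≤ b) (hδ : MemLp δ 2 (volume.restrict (Ioc a b))) (hφ : ContinuousOn φ (Icc a b)) :
    IntervalIntegrable (fun t => δ t * φ t) volume a b := by
  rw [intervalIntegrable_iff_integrableOn_Ioc_of_le hab]
  exact IntegrableOn.mul_continuousOn_of_subset (hδ.integrable one_le_two) hφ measurableSet_Ioc
    isCompact_Icc Ioc_subset_Icc_self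

theorem integral_half_sq_add_mul_add_s10 {a b : ℝ} (u c δ : ℝ → ℝ)
    (hu : IntervalIntegrable (fun t => 1/2 * (u t)^2 + u t * c t) volume a b)
    (hδ : IntervalIntegrable (fun t => 1/2 * (δ t)^2) volume a b)
    (hδuc : IntervalIntegrable (fun t => δ t * (u t + c t)) volume a b) :
    ∫ t in a..b, (1/2 * ((u + δ) t)^2 + (u + δ) t * c t)
      = (∫ t in a..b, (1/2 * (u t)^2 + u t * c t))
        + ((∫ t in a..b, 1/2 * (δ t)^2) + ∫ t in a..b, δ t * (u t + c t)) := by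
  rw [← integral_add hδ hδuc, ← integral_add hu (hδ.add hδuc)]
  refine integral_congr fun t _ => ?_
  simp only [Pi.add_apply]
  ring

theorem integral_mul_le_integral_mul_of_eqOn {a b t₀ : ℝ} {δ p q : ℝ → ℝ} (hab : a ≤ b)
    (hq : IntervalIntegrable (fun t => δ t * q t) volume a b)
    (hp : IntervalIntegrable (fun t => δ t * p t) volume a b)
    (heq : EqOn p q (Ioc a t₀)) (hle : ∀ t ∈ Ioc t₀ b, q t ≤ p t)
    (hδ : ∀ᵐ t ∂volume.restrict (Ioc t₀ b), 0 ≤ δ t) :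
    ∫ t in a..b, δ t * q t ≤ ∫ t in a..b, δ t * p t := by
  rw [integral_of_le hab, integral_of_le hab]
  refine setIntegral_mono_ae_restrict hq.1 hp.1 ((ae_restrict_iff' measurableSet_Ioc).2 ?_)
  rw [ae_restrict_iff' measurableSet_Ioc] at hδ
  filter_upwards [hδ] with t hδt ht
  rcases le_or_gt t t₀ with hle₀ | hgt₀
  · rw [heq ⟨ht.1, hle₀⟩]
  · exact mul_le_mul_of_nonneg_left (hle t ⟨hgt₀, ht.2⟩) (hδt ⟨hgt₀, ht.2⟩)

theorem stmt_10_general (f g : ℝ → ℝ)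
    (hf : ContinuousOn f (Set.Ici 0)) (hg : ContinuousOn g (Set.Ici 0))
    (T γ lam : ℝ) (hT : 0 < T)
    (F H uhat : ℝ → ℝ)
    (hF : ∀ t, F t = Real.exp (∫ s in (0:ℝ)..t, f s))
    (hH : ∀ t, H t = ∫ τ in (0:ℝ)..t, F τ)
    (huhat : ∀ t, uhat t
      = max 0 (-1 - γ * (g t * H t) / F t + lam * (g t / F t)))
    (t₀ : ℝ)
    (huhat₁ : ∀ t ∈ Set.Icc (0:ℝ) t₀,
      uhat t = -1 - γ * (g t * H t) / F t + lam * (g t / F t))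
    (Jred : (ℝ → ℝ) → ℝ)
    (hJred : ∀ u : ℝ → ℝ,
      Jred u = ∫ t in (0:ℝ)..T,
        (1/2 * (u t)^2 + u t * (1 + γ * (H t * g t / F t))))
    (δ : ℝ → ℝ)
    (hδ : MemLp δ 2 (volume.restrict (Set.Ioc (0:ℝ) T)))
    (hδmom : ∫ τ in (0:ℝ)..T, δ τ * (g τ / F τ) = 0)
    (hδpos' : ∀ᵐ t ∂(volume.restrict (Set.Ioc t₀ T)), 0 ≤ δ t) :
    Jred uhat ≤ Jred (uhat + δ) ∧
    (∫ t in (0:ℝ)..T, 1/2 * (δ t)^2) ≤ Jred (uhat + δ) - Jred uhat := by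
  have hF0 : ∀ t ∈ Icc 0 T, F t ≠ 0 := fun t _ => hF t ▸ (Real.exp_pos _).ne'
  have hgc : ContinuousOn g (Icc 0 T) := hg.mono Icc_subset_Ici_self
  have hFc : ContinuousOn F (Icc 0 T) :=
    (Real.continuous_exp.comp_continuousOn (continuousOn_primitive_of_continuousOn hT.le
      (hf.mono Icc_subset_Ici_self))).congr fun t _ => hF t
  have hHc : ContinuousOn H (Icc 0 T) :=
    (continuousOn_primitive_of_continuousOn hT.le hFc).congr fun t _ => hH t
  have hûc : ContinuousOn uhat (Icc 0 T) :=
    ContinuousOn.congr (by fun_prop (disch := exact hF0)) fun t _ => huhat t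
  have first_order : 0 ≤ ∫ t in (0:ℝ)..T, δ t * (uhat t + (1 + γ * (H t * g t / F t))) :=
    calc 0 = ∫ t in (0:ℝ)..T, δ t * (lam * (g t / F t)) := by
          simp only [mul_left_comm (δ _), intervalIntegral.integral_const_mul, hδmom, mul_zero]
      _ ≤ _ := by
          refine integral_mul_le_integral_mul_of_eqOn hT.le
            (hδ.intervalIntegrable_mul_continuousOn hT.le (by fun_prop (disch := exact hF0)))
            (hδ.intervalIntegrable_mul_continuousOn hT.le (by fun_prop (disch := exact hF0)))
            (fun t ht => ?_) (fun t _ => ?_) hδpos'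
          · rw [huhat₁ t (Ioc_subset_Icc_self ht)]
            ring
          · have hmax := le_max_right 0 (-1 - γ * (g t * H t) / F t + lam * (g t / F t))
            have hregroup : γ * (g t * H t) / F t = γ * (H t * g t / F t) := by ring
            linarith [huhat t]
  have expansion := integral_half_sq_add_mul_add_s10 uhat (fun t => 1 + γ * (H t * g t / F t)) δ
    ((by fun_prop (disch := exact hF0) : ContinuousOn _ (Icc 0 T)).intervalIntegrable_of_Icc hT.le)
    ((intervalIntegrable_iff_integrableOn_Ioc_of_le hT.le).2 (hδ.integrable_sq.const_mul _))
    (hδ.intervalIntegrable_mul_continuousOn hT.le (by fun_prop (disch := exact hF0)))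
  have hδsq : 0 ≤ ∫ t in (0:ℝ)..T, 1/2 * (δ t)^2 :=
    integral_nonneg hT.le fun t _ => by positivity
  rw [hJred, hJred, expansion]
  constructor <;> linarith

/-- With `F(t) = exp(∫₀^t f)`, `H(t) = ∫₀^t F`,
`uhat(t) = max{0, -1 - γ g H/F + λ g/F}`, and `t₀ ∈ (0,T]` such that `uhat`
coincides with the unmaximized expression on `[0,t₀]`, vanishes on `[t₀,T]`
where the expression is `≤ 0`, every perturbation `δ ∈ L²(0,T)` with
`∫₀^T δ g/F = 0`, `uhat + δ ≥ 0` a.e. and `δ ≥ 0` a.e. on `[t₀,T]` increases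
the reduced objective `Jred(u) = ∫₀^T [½u² + u(1 + γ H g/F)]`, the increase
being at least `∫₀^T ½δ²`. -/
theorem stmt_10 (f g : ℝ → ℝ)
    (hf : ContinuousOn f (Set.Ici 0)) (hg : ContinuousOn g (Set.Ici 0))
    (hfpos : ∀ t : ℝ, 0 ≤ t → 0 < f t) (hgpos : ∀ t : ℝ, 0 ≤ t → 0 < g t)
    (T γ α lam : ℝ) (hT : 0 < T) (hγ : 1 ≤ γ) (hα : α < 0) (hlam : 0 < lam)
    (F H uhat : ℝ → ℝ)
    (hF : ∀ t, F t = Real.exp (∫ s in (0:ℝ)..t, f s))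
    (hH : ∀ t, H t = ∫ τ in (0:ℝ)..t, F τ)
    (huhat : ∀ t, uhat t
      = max 0 (-1 - γ * (g t * H t) / F t + lam * (g t / F t)))
    (t₀ : ℝ) (ht₀ : t₀ ∈ Set.Ioc (0:ℝ) T)
    (huhat₁ : ∀ t ∈ Set.Icc (0:ℝ) t₀,
      uhat t = -1 - γ * (g t * H t) / F t + lam * (g t / F t))
    (huhat₂ : ∀ t ∈ Set.Icc t₀ T, uhat t = 0)
    (hexpr : ∀ t ∈ Set.Icc t₀ T,
      -1 - γ * (g t * H t) / F t + lam * (g t / F t) ≤ 0)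
    (Jred : (ℝ → ℝ) → ℝ)
    (hJred : ∀ u : ℝ → ℝ,
      Jred u = ∫ t in (0:ℝ)..T,
        (1/2 * (u t)^2 + u t * (1 + γ * (H t * g t / F t))))
    (δ : ℝ → ℝ)
    (hδ : MemLp δ 2 (volume.restrict (Set.Ioc (0:ℝ) T)))
    (hδmom : ∫ τ in (0:ℝ)..T, δ τ * (g τ / F τ) = 0)
    (hδpos : ∀ᵐ t ∂(volume.restrict (Set.Ioc (0:ℝ) T)), 0 ≤ uhat t + δ t)
    (hδpos' : ∀ᵐ t ∂(volume.restrict (Set.Ioc t₀ T)), 0 ≤ δ t) :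
    Jred uhat ≤ Jred (uhat + δ) ∧
    (∫ t in (0:ℝ)..T, 1/2 * (δ t)^2) ≤ Jred (uhat + δ) - Jred uhat :=
  stmt_10_general f g hf hg T γ lam hT F H uhat hF hH huhat t₀ huhat₁ Jred hJred δ hδ hδmom hδpos'
end

section
/- Let f : [0,∞) → ℝ be continuous with f > 0, let g : [0,∞) → ℝ be continuously differentiable with g > 0 and g'(t) ≤ f(t)·g(t) for all t ≥ 0, let α < 0, T > 0, and set F(t) = exp(∫₀^t f(s) ds), H(t) = ∫₀^t F(τ) dτ. Let t₁ ∈ (0, T) satisfy -α - (F(t₁)/g(t₁))·∫₀^{t₁} g²/F² dt + ∫₀^{t₁} g/F dt > 0, and define γ(t₁) = [ -α - (F(t₁)/g(t₁))·∫₀^{t₁} g²/F² dt + ∫₀^{t₁} g/F dt ] / [ ∫₀^{t₁} (H(t₁) - H(t)) g²/F² dt ] and λ₁ = [ -α + ∫₀^{t₁} g/F dt + γ(t₁)·∫₀^{t₁} H g²/F² dt ] / [ ∫₀^{t₁} g²/F² dt ]. Then the control û(t) = max{0, -1 - γ(t₁) g(t)H(t)/F(t) + λ₁ g(t)/F(t)}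 is nonincreasing on [0,T], satisfies û(t₁) = 0 and û(t) = 0 for all t ∈ [t₁, T] (i.e. its support is contained in [0, t₁]), and satisfies the moment equation ∫₀^T û(τ) g(τ)/F(τ) dτ = -α. -/
/-!
Write `q = g / F`, so that `û = max 0 ((λ₁ - γ H) q - 1)`. The condition `g' ≤ f g` makes `q`
nonincreasing and `H` is increasing; the condition on `t₁` makes `γ(t₁) > 0`. Hence `(λ₁ - γ H) q`
is nonincreasing wherever it is positive, and so is `û`. Eliminating the integrals between (18)
and (19) gives `λ₁ - γ H(t₁) = 1 / q(t₁)`, i.e. `û(t₁) = 0`, so `û` vanishes on `[t₁, T]` and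
equals `(λ₁ - γ H) q - 1` on `[0, t₁]`; there the moment equation is (19) multiplied out.
-/

open MeasureTheory intervalIntegral Set

section Primitive

variable {f : ℝ → ℝ}

lemma continuousOn_primitive_Ici (hf : ContinuousOn f (Ici 0)) :
    ContinuousOn (fun x => ∫ s in (0:ℝ)..x, f s) (Ici 0) := by
  intro t (ht : 0 ≤ t)
  have ht1 : (0:ℝ) ≤ t + 1 := by linarith
  have hIcc := continuousOn_primitive_interval'
    ((hf.mono Icc_subset_Ici_self).intervalIntegrable_of_Icc (μ := volume) ht1) left_mem_uIcc
  rw [uIcc_of_le ht1] at hIcc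
  refine (hIcc t ⟨ht, by linarith⟩).mono_of_mem_nhdsWithin ?_
  rw [← Ici_inter_Iic]
  exact inter_mem_nhdsWithin _ (Iic_mem_nhds (by linarith))

lemma hasDerivAt_primitive_of_continuousOn_Ici (hf : ContinuousOn f (Ici 0)) {t : ℝ}
    (ht : 0 < t) : HasDerivAt (fun x => ∫ s in (0:ℝ)..x, f s) (f t) t :=
  integral_hasDerivAt_right ((hf.mono Icc_subset_Ici_self).intervalIntegrable_of_Icc ht.le)
    ⟨Ici 0, Ici_mem_nhds ht, hf.aestronglyMeasurable measurableSet_Ici⟩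
    (hf.continuousAt (Ici_mem_nhds ht))

lemma strictMonoOn_primitive_of_pos (hf : ContinuousOn f (Ici 0))
    (hpos : ∀ t, 0 ≤ t → 0 < f t) :
    StrictMonoOn (fun x => ∫ s in (0:ℝ)..x, f s) (Ici 0) := by
  refine strictMonoOn_of_deriv_pos (convex_Ici 0) (continuousOn_primitive_Ici hf) fun t ht => ?_
  rw [interior_Ici] at ht
  rw [(hasDerivAt_primitive_of_continuousOn_Ici hf ht).deriv]
  exact hpos t (le_of_lt ht)

end Primitive

lemma antitoneOn_div_of_hasDerivAt {s : Set ℝ} (hs : Convex ℝ s) {g F g' F' : ℝ → ℝ}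
    (hgc : ContinuousOn g s) (hFc : ContinuousOn F s) (hF0 : ∀ t ∈ s, 0 < F t)
    (hg : ∀ t ∈ interior s, HasDerivAt g (g' t) t)
    (hF : ∀ t ∈ interior s, HasDerivAt F (F' t) t)
    (hle : ∀ t ∈ interior s, g' t * F t ≤ g t * F' t) :
    AntitoneOn (fun t => g t / F t) s := by
  have hq : ∀ t ∈ interior s,
      HasDerivAt (fun t => g t / F t) ((g' t * F t - g t * F' t) / F t ^ 2) t :=
    fun t ht => (hg t ht).div (hF t ht) (hF0 t (interior_subset ht)).ne'
  refine antitoneOn_of_deriv_nonpos hs (hgc.div hFc fun t ht => (hF0 t ht).ne')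
    (fun t ht => (hq t ht).differentiableAt.differentiableWithinAt) fun t ht => ?_
  rw [(hq t ht).deriv]
  exact div_nonpos_of_nonpos_of_nonneg (sub_nonpos.2 (hle t ht)) (sq_nonneg _)

lemma antitoneOn_div_exp_primitive {f g g' : ℝ → ℝ} (hf : ContinuousOn f (Ici 0))
    (hg : ∀ t : ℝ, 0 ≤ t → HasDerivWithinAt g (g' t) (Ici 0) t)
    (hle : ∀ t : ℝ, 0 ≤ t → g' t ≤ f t * g t) :
    AntitoneOn (fun t => g t / Real.exp (∫ s in (0:ℝ)..t, f s)) (Ici 0) := by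
  refine antitoneOn_div_of_hasDerivAt (convex_Ici 0) (g' := g')
    (F' := fun t => Real.exp (∫ s in (0:ℝ)..t, f s) * f t)
    (fun t ht => (hg t ht).continuousWithinAt)
    (Real.continuous_exp.comp_continuousOn (continuousOn_primitive_Ici hf))
    (fun _ _ => Real.exp_pos _) (fun t ht => ?_) (fun t ht => ?_) (fun t ht => ?_) <;>
    rw [interior_Ici] at ht
  · exact (hg t (le_of_lt ht)).hasDerivAt (Ici_mem_nhds ht)
  · exact (hasDerivAt_primitive_of_continuousOn_Ici hf ht).exp
  · calc g' t * Real.exp (∫ s in (0:ℝ)..t, f s)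
        ≤ f t * g t * Real.exp (∫ s in (0:ℝ)..t, f s) :=
          mul_le_mul_of_nonneg_right (hle t (le_of_lt ht)) (Real.exp_pos _).le
      _ = g t * (Real.exp (∫ s in (0:ℝ)..t, f s) * f t) := by ring

lemma integral_eq_of_eqOn_Icc_of_eq_zero {u v : ℝ → ℝ} {a b c : ℝ} (hab : a ≤ b) (hbc : b ≤ c)
    (hu : IntervalIntegrable u volume a c) (huv : EqOn u v (Icc a b))
    (hu0 : ∀ t ∈ Icc b c, u t = 0) :
    ∫ t in a..c, u t = ∫ t in a..b, v t := by
  have hac : a ≤ c := hab.trans hbc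
  have hab_int : IntervalIntegrable u volume a b := hu.mono_set (by
    rw [uIcc_of_le hab, uIcc_of_le hac]; exact Icc_subset_Icc_right hbc)
  have hbc_int : IntervalIntegrable u volume b c := hu.mono_set (by
    rw [uIcc_of_le hbc, uIcc_of_le hac]; exact Icc_subset_Icc_left hab)
  have hzero : ∫ t in b..c, u t = 0 := by
    rw [integral_congr (g := fun _ => (0:ℝ)) (by rwa [uIcc_of_le hbc])]
    exact intervalIntegral.integral_zero
  rw [← integral_add_adjacent_intervals hab_int hbc_int, hzero, add_zero]
  exact integral_congr (by rwa [uIcc_of_le hab])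

section Control

variable {H q w : ℝ → ℝ} {lam γ : ℝ}

lemma sub_mul_eq_of_weighted_integrals {a b c r : ℝ}
    (hw : IntervalIntegrable w volume a b)
    (hHw : IntervalIntegrable (fun t => H t * w t) volume a b)
    (hD : ∫ t in a..b, w t ≠ 0)
    (hγ : γ * ∫ t in a..b, (H b - H t) * w t = r - c * ∫ t in a..b, w t)
    (hlam : lam * ∫ t in a..b, w t = r + γ * ∫ t in a..b, H t * w t) :
    lam - γ * H b = c := by
  have hsplit : ∫ t in a..b, (H b - H t) * w t
      = H b * (∫ t in a..b, w t) - ∫ t in a..b, H t * w t := by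
    simp only [sub_mul]
    rw [integral_sub (hw.const_mul _) hHw, intervalIntegral.integral_const_mul]
  refine mul_right_cancel₀ hD ?_
  linear_combination hlam - hγ + γ * hsplit

lemma integral_sub_mul_pos {a b : ℝ} (hab : a < b) (hH : StrictMonoOn H (Icc a b))
    (hHc : ContinuousOn H (Icc a b)) (hwc : ContinuousOn w (Icc a b))
    (hw : ∀ t ∈ Icc a b, 0 < w t) :
    0 < ∫ t in a..b, (H b - H t) * w t :=
  intervalIntegral_pos_of_pos_on
    (((continuousOn_const.sub hHc).mul hwc).intervalIntegrable_of_Icc hab.le)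
    (fun t ht => mul_pos (sub_pos.2 (hH (Ioo_subset_Icc_self ht) (right_mem_Icc.2 hab.le) ht.2))
      (hw t (Ioo_subset_Icc_self ht))) hab

/-- The paper's `û`, written with `q = g / F`: `-1 - γ g H / F + λ g / F = (λ - γ H) q - 1`. -/
def candidateControl (lam γ : ℝ) (H q : ℝ → ℝ) (t : ℝ) : ℝ :=
  max 0 ((lam - γ * H t) * q t - 1)

lemma candidateControl_nonneg (t : ℝ) : 0 ≤ candidateControl lam γ H q t :=
  le_max_left _ _

lemma ContinuousOn.candidateControl {s : Set ℝ} (hH : ContinuousOn H s)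
    (hq : ContinuousOn q s) : ContinuousOn (candidateControl lam γ H q) s :=
  ContinuousOn.sup continuousOn_const
    (((continuousOn_const.sub (continuousOn_const.mul hH)).mul hq).sub continuousOn_const)

lemma antitoneOn_candidateControl {s : Set ℝ} (hγ : 0 ≤ γ) (hH : MonotoneOn H s)
    (hq : AntitoneOn q s) (hq0 : ∀ t ∈ s, 0 ≤ q t) : AntitoneOn (candidateControl lam γ H q) s := by
  intro a ha b hb hab
  rcases le_or_gt ((lam - γ * H b) * q b - 1) 0 with hb0 | hb0
  · exact (max_eq_left hb0).trans_le (candidateControl_nonneg a)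
  have hLb : 0 < lam - γ * H b := by nlinarith [hq0 b hb]
  have hL : lam - γ * H b ≤ lam - γ * H a :=
    sub_le_sub_left (mul_le_mul_of_nonneg_left (hH ha hb hab) hγ) lam
  exact max_le_max le_rfl
    (sub_le_sub_right (mul_le_mul hL (hq ha hb hab) (hq0 b hb) (hLb.le.trans hL)) 1)

lemma candidateControl_eq_zero {t₁ : ℝ} (hq₁ : q t₁ ≠ 0) (hkey : lam - γ * H t₁ = (q t₁)⁻¹) :
    candidateControl lam γ H q t₁ = 0 := by
  rw [candidateControl, hkey, inv_mul_cancel₀ hq₁, sub_self, max_self]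

lemma candidateControl_eq_of_le {s : Set ℝ} {t t₁ : ℝ} (hγ : 0 ≤ γ) (hH : MonotoneOn H s)
    (hq : AntitoneOn q s) (hq₁ : 0 < q t₁) (hkey : lam - γ * H t₁ = (q t₁)⁻¹)
    (ht : t ∈ s) (ht₁ : t₁ ∈ s) (htt₁ : t ≤ t₁) :
    candidateControl lam γ H q t = (lam - γ * H t) * q t - 1 := by
  refine max_eq_right (sub_nonneg.2 ?_)
  have hL : (q t₁)⁻¹ ≤ lam - γ * H t :=
    hkey ▸ sub_le_sub_left (mul_le_mul_of_nonneg_left (hH ht ht₁ htt₁) hγ) lam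
  calc (1:ℝ) = (q t₁)⁻¹ * q t₁ := (inv_mul_cancel₀ hq₁.ne').symm
    _ ≤ (lam - γ * H t) * q t :=
      mul_le_mul hL (hq ht ht₁ htt₁) hq₁.le ((inv_pos.2 hq₁).le.trans hL)

lemma integral_candidateControl_mul {a b c : ℝ} (hab : a ≤ b) (hbc : b ≤ c)
    (hHc : ContinuousOn H (Icc a c)) (hqc : ContinuousOn q (Icc a c))
    (heq : ∀ t ∈ Icc a b, candidateControl lam γ H q t = (lam - γ * H t) * q t - 1)
    (hzero : ∀ t ∈ Icc b c, candidateControl lam γ H q t = 0) :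
    ∫ t in a..c, candidateControl lam γ H q t * q t
      = lam * (∫ t in a..b, q t ^ 2) - γ * (∫ t in a..b, H t * q t ^ 2) - ∫ t in a..b, q t := by
  have hsub : Icc a b ⊆ Icc a c := Icc_subset_Icc_right hbc
  have hq2 : IntervalIntegrable (fun t => q t ^ 2) volume a b :=
    ((hqc.mono hsub).pow 2).intervalIntegrable_of_Icc hab
  have hHq2 : IntervalIntegrable (fun t => H t * q t ^ 2) volume a b :=
    ((hHc.mono hsub).mul ((hqc.mono hsub).pow 2)).intervalIntegrable_of_Icc hab
  rw [integral_eq_of_eqOn_Icc_of_eq_zero hab hbc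
      (u := fun t => candidateControl lam γ H q t * q t)
      (((hHc.candidateControl hqc).mul hqc).intervalIntegrable_of_Icc (hab.trans hbc))
      (v := fun t => lam * q t ^ 2 - γ * (H t * q t ^ 2) - q t)
      (fun t ht => by dsimp only; rw [heq t ht]; ring) (fun t ht => by simp [hzero t ht]),
    integral_sub ((hq2.const_mul _).sub (hHq2.const_mul _))
      ((hqc.mono hsub).intervalIntegrable_of_Icc hab),
    integral_sub (hq2.const_mul _) (hHq2.const_mul _), intervalIntegral.integral_const_mul,
    intervalIntegral.integral_const_mul]

theorem candidateControl_spec {α T t₁ : ℝ} (ht₁ : t₁ ∈ Ioo 0 T)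
    (hqc : ContinuousOn q (Ici 0)) (hq_pos : ∀ t ∈ Ici (0:ℝ), 0 < q t)
    (hq_anti : AntitoneOn q (Ici 0))
    (hHc : ContinuousOn H (Ici 0)) (hH : StrictMonoOn H (Ici 0))
    (hcond : 0 < -α - (q t₁)⁻¹ * (∫ t in (0:ℝ)..t₁, q t ^ 2) + ∫ t in (0:ℝ)..t₁, q t)
    (hγ : γ = (-α - (q t₁)⁻¹ * (∫ t in (0:ℝ)..t₁, q t ^ 2) + ∫ t in (0:ℝ)..t₁, q t)
        / ∫ t in (0:ℝ)..t₁, (H t₁ - H t) * q t ^ 2)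
    (hlam : lam = (-α + (∫ t in (0:ℝ)..t₁, q t) + γ * ∫ t in (0:ℝ)..t₁, H t * q t ^ 2)
        / ∫ t in (0:ℝ)..t₁, q t ^ 2) :
    AntitoneOn (candidateControl lam γ H q) (Icc 0 T) ∧ candidateControl lam γ H q t₁ = 0 ∧
      (∀ t ∈ Icc t₁ T, candidateControl lam γ H q t = 0) ∧
      ∫ t in (0:ℝ)..T, candidateControl lam γ H q t * q t = -α := by
  obtain ⟨ht₁0, ht₁T⟩ := ht₁
  have hsub : Icc 0 t₁ ⊆ Ici (0:ℝ) := Icc_subset_Ici_self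
  have hq2c : ContinuousOn (fun t => q t ^ 2) (Icc 0 t₁) := (hqc.mono hsub).pow 2
  have hD : 0 < ∫ t in (0:ℝ)..t₁, q t ^ 2 :=
    intervalIntegral_pos_of_pos_on (hq2c.intervalIntegrable_of_Icc ht₁0.le)
      (fun t ht => pow_pos (hq_pos t ht.1.le) 2) ht₁0
  have hD₂ := integral_sub_mul_pos ht₁0 (hH.mono hsub) (hHc.mono hsub) hq2c
    (fun t ht => pow_pos (hq_pos t ht.1) 2)
  have hγ0 : 0 < γ := hγ ▸ div_pos hcond hD₂
  have hlamD : lam * ∫ t in (0:ℝ)..t₁, q t ^ 2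
      = -α + (∫ t in (0:ℝ)..t₁, q t) + γ * ∫ t in (0:ℝ)..t₁, H t * q t ^ 2 := by
    rw [hlam, div_mul_cancel₀ _ hD.ne']
  have hkey : lam - γ * H t₁ = (q t₁)⁻¹ :=
    sub_mul_eq_of_weighted_integrals (hq2c.intervalIntegrable_of_Icc ht₁0.le)
      (((hHc.mono hsub).mul hq2c).intervalIntegrable_of_Icc ht₁0.le) hD.ne'
      (by rw [hγ, div_mul_cancel₀ _ hD₂.ne']; ring) hlamD
  have hq₁ : 0 < q t₁ := hq_pos t₁ ht₁0.le
  have hanti : AntitoneOn (candidateControl lam γ H q) (Icc 0 T) :=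
    (antitoneOn_candidateControl hγ0.le hH.monotoneOn hq_anti fun t ht => (hq_pos t ht).le).mono
      Icc_subset_Ici_self
  have hzero := candidateControl_eq_zero hq₁.ne' hkey
  have hvanish : ∀ t ∈ Icc t₁ T, candidateControl lam γ H q t = 0 := fun t ht =>
    le_antisymm (hzero ▸ hanti ⟨ht₁0.le, ht₁T.le⟩ ⟨ht₁0.le.trans ht.1, ht.2⟩ ht.1)
      (candidateControl_nonneg t)
  refine ⟨hanti, hzero, hvanish, ?_⟩
  rw [integral_candidateControl_mul ht₁0.le ht₁T.le (hHc.mono Icc_subset_Ici_self)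
    (hqc.mono Icc_subset_Ici_self)
    (fun t ht => candidateControl_eq_of_le hγ0.le hH.monotoneOn hq_anti hq₁ hkey ht.1 ht₁0.le
      ht.2) hvanish]
  linarith

end Control

theorem stmt_15_general (f g g' : ℝ → ℝ)
    (hf : ContinuousOn f (Set.Ici 0))
    (hgderiv : ∀ t : ℝ, 0 ≤ t → HasDerivWithinAt g (g' t) (Set.Ici 0) t)
    (hgpos : ∀ t : ℝ, 0 ≤ t → 0 < g t)
    (hineq : ∀ t : ℝ, 0 ≤ t → g' t ≤ f t * g t)
    (α T : ℝ)
    (F H : ℝ → ℝ)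
    (hF : ∀ t, F t = Real.exp (∫ s in (0:ℝ)..t, f s))
    (hH : ∀ t, H t = ∫ τ in (0:ℝ)..t, F τ)
    (t₁ : ℝ) (ht₁ : t₁ ∈ Set.Ioo (0:ℝ) T)
    (hcond : 0 < -α - (F t₁ / g t₁) * (∫ t in (0:ℝ)..t₁, (g t)^2 / (F t)^2)
        + ∫ t in (0:ℝ)..t₁, g t / F t)
    (γt₁ lam₁ : ℝ)
    (hγt₁ : γt₁ =
      (-α - (F t₁ / g t₁) * (∫ t in (0:ℝ)..t₁, (g t)^2 / (F t)^2)
          + ∫ t in (0:ℝ)..t₁, g t / F t)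
        / ∫ t in (0:ℝ)..t₁, (H t₁ - H t) * (g t)^2 / (F t)^2)
    (hlam₁ : lam₁ =
      (-α + (∫ t in (0:ℝ)..t₁, g t / F t)
          + γt₁ * ∫ t in (0:ℝ)..t₁, H t * (g t)^2 / (F t)^2)
        / ∫ t in (0:ℝ)..t₁, (g t)^2 / (F t)^2)
    (uhat : ℝ → ℝ)
    (huhat : ∀ t, uhat t
      = max 0 (-1 - γt₁ * (g t * H t) / F t + lam₁ * (g t / F t))) :
    AntitoneOn uhat (Set.Icc 0 T) ∧
    uhat t₁ = 0 ∧
    (∀ t ∈ Set.Icc t₁ T, uhat t = 0) ∧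
    ∫ τ in (0:ℝ)..T, uhat τ * (g τ / F τ) = -α := by
  have hF_eq : F = fun t => Real.exp (∫ s in (0:ℝ)..t, f s) := funext hF
  have hH_eq : H = fun t => ∫ τ in (0:ℝ)..t, F τ := funext hH
  have hF0 : ∀ t, 0 < F t := fun t => hF t ▸ Real.exp_pos _
  have hFc : ContinuousOn F (Ici 0) := by
    rw [hF_eq]; exact Real.continuous_exp.comp_continuousOn (continuousOn_primitive_Ici hf)
  have hgc : ContinuousOn g (Ici 0) := fun t ht => (hgderiv t ht).continuousWithinAt
  have hq_anti : AntitoneOn (fun t => g t / F t) (Ici 0) := by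
    rw [hF_eq]; exact antitoneOn_div_exp_primitive hf hgderiv hineq
  have hu : uhat = candidateControl lam₁ γt₁ H (fun t => g t / F t) :=
    funext fun t => by rw [huhat, candidateControl]; congr 1; ring
  subst hu
  simp only [mul_div_assoc, ← div_pow, ← inv_div (g t₁) (F t₁)] at hcond hγt₁ hlam₁
  exact candidateControl_spec ht₁
    (hgc.div hFc fun t _ => (hF0 t).ne')
    (fun t ht => div_pos (hgpos t ht) (hF0 t)) hq_anti
    (hH_eq ▸ continuousOn_primitive_Ici hFc)
    (hH_eq ▸ strictMonoOn_primitive_of_pos hFc fun t _ => hF0 t) hcond hγt₁ hlam₁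

/-- Under the assumptions `f` continuous positive, `g` C¹
positive with `g' ≤ f g`, `α < 0`, `T > 0`, `t₁ ∈ (0,T)` satisfying condition
(t1condition), with `F(t) = exp(∫₀^t f)`, `H(t) = ∫₀^t F`, and `γ(t₁)`, `λ₁`
defined by equations (18) and (19), the control
`uhat(t) = max{0, -1 - γ(t₁) g H/F + λ₁ g/F}` is nonincreasing on `[0,T]`,
satisfies `uhat(t₁) = 0`, vanishes on `[t₁,T]` (its support is contained in
`[0,t₁]`), and satisfies the moment equation `∫₀^T uhat g/F = -α`. -/
theorem stmt_15 (f g g' : ℝ → ℝ)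
    (hf : ContinuousOn f (Set.Ici 0))
    (hfpos : ∀ t : ℝ, 0 ≤ t → 0 < f t)
    (hgderiv : ∀ t : ℝ, 0 ≤ t → HasDerivWithinAt g (g' t) (Set.Ici 0) t)
    (hg'cont : ContinuousOn g' (Set.Ici 0))
    (hgpos : ∀ t : ℝ, 0 ≤ t → 0 < g t)
    (hineq : ∀ t : ℝ, 0 ≤ t → g' t ≤ f t * g t)
    (α T : ℝ) (hα : α < 0) (hT : 0 < T)
    (F H : ℝ → ℝ)
    (hF : ∀ t, F t = Real.exp (∫ s in (0:ℝ)..t, f s))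
    (hH : ∀ t, H t = ∫ τ in (0:ℝ)..t, F τ)
    (t₁ : ℝ) (ht₁ : t₁ ∈ Set.Ioo (0:ℝ) T)
    (hcond : 0 < -α - (F t₁ / g t₁) * (∫ t in (0:ℝ)..t₁, (g t)^2 / (F t)^2)
        + ∫ t in (0:ℝ)..t₁, g t / F t)
    (γt₁ lam₁ : ℝ)
    (hγt₁ : γt₁ =
      (-α - (F t₁ / g t₁) * (∫ t in (0:ℝ)..t₁, (g t)^2 / (F t)^2)
          + ∫ t in (0:ℝ)..t₁, g t / F t)
        / ∫ t in (0:ℝ)..t₁, (H t₁ - H t) * (g t)^2 / (F t)^2)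
    (hlam₁ : lam₁ =
      (-α + (∫ t in (0:ℝ)..t₁, g t / F t)
          + γt₁ * ∫ t in (0:ℝ)..t₁, H t * (g t)^2 / (F t)^2)
        / ∫ t in (0:ℝ)..t₁, (g t)^2 / (F t)^2)
    (uhat : ℝ → ℝ)
    (huhat : ∀ t, uhat t
      = max 0 (-1 - γt₁ * (g t * H t) / F t + lam₁ * (g t / F t))) :
    AntitoneOn uhat (Set.Icc 0 T) ∧
    uhat t₁ = 0 ∧
    (∀ t ∈ Set.Icc t₁ T, uhat t = 0) ∧
    ∫ τ in (0:ℝ)..T, uhat τ * (g τ / F τ) = -α :=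
  stmt_15_general f g g' hf hgderiv hgpos hineq α T F H hF hH t₁ ht₁ hcond γt₁ lam₁ hγt₁ hlam₁ uhat
    huhat
end
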